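/- For a set Σ of fully-existential rules, the oblivious chase terminates on all instances if and only if Σ is bounded for the oblivious chase, i.e., there exists an integer k such that for all instances I, o-chase^k(I, Σ) = o-chase(I, Σ). -/

import Mathlib

namespace ChasePaper

/-- Rules: atoms are (predicate, list of variables). -/
structure Rule (P V : Type) where
  body : List (P × List V)
  head : List (P × List V)

/-- Terms appearing in the chase: constants, (instance) variables, and fresh
variables `z_{(σ,π)}` named by the rule, the existential variable, and a substitution. -/
inductive GTerm (P C V : Type) where
  | const : C → GTerm P C V
  | var   : V → GTerm P C V
  | fresh : Rule P V → V → (V → GTerm P C V) → GTerm P C V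

abbrev GAtom (P C V : Type) := P × List (GTerm P C V)

variable {P C V : Type}

def bodyVars (σ : Rule P V) : List V := σ.body.flatMap Prod.snd
def headVars (σ : Rule P V) : List V := σ.head.flatMap Prod.snd
def frontier [DecidableEq V] (σ : Rule P V) : List V :=
  (bodyVars σ).filter (· ∈ headVars σ)

/-- A rule is datalog if all head variables occur in the body. -/
def IsDatalog (σ : Rule P V) : Prop := ∀ v ∈ headVars σ, v ∈ bodyVars σ
/-- A rule is fully-existential if every head atom contains an existential variable. -/
def IsFE (σ : Rule P V) : Prop := ∀ a ∈ σ.head, ∃ v ∈ a.2, v ∉ bodyVars σ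

def applyAtom (π : V → GTerm P C V) (a : P × List V) : GAtom P C V :=
  (a.1, a.2.map π)

def restrictBody [DecidableEq V] (σ : Rule P V) (π : V → GTerm P C V) : V → GTerm P C V :=
  fun u => if u ∈ bodyVars σ then π u else GTerm.var u

def restrictFr [DecidableEq V] (σ : Rule P V) (π : V → GTerm P C V) : V → GTerm P C V :=
  fun u => if u ∈ frontier σ then π u else GTerm.var u

/-- Oblivious naming of fresh variables: `z_{(σ,π)}`. -/
def extendO [DecidableEq V] (σ : Rule P V) (π : V → GTerm P C V) : V → GTerm P C V :=
  fun v => if v ∈ bodyVars σ then π v else GTerm.fresh σ v (restrictBody σ π)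

/-- Semi-oblivious naming of fresh variables: `z_{(σ,π|fr(σ))}`. -/
def extendSO [DecidableEq V] (σ : Rule P V) (π : V → GTerm P C V) : V → GTerm P C V :=
  fun v => if v ∈ bodyVars σ then π v else GTerm.fresh σ v (restrictFr σ π)

def isTrigger (σ : Rule P V) (π : V → GTerm P C V) (S : Set (GAtom P C V)) : Prop :=
  ∀ a ∈ σ.body, applyAtom π a ∈ S

/-- Breadth-first oblivious chase. -/
def ochase [DecidableEq V] (Rs : Set (Rule P V)) (I : Set (GAtom P C V)) : ℕ → Set (GAtom P C V)
  | 0 => I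
  | i+1 => ochase Rs I i ∪
      {f | ∃ σ ∈ Rs, ∃ π, isTrigger σ π (ochase Rs I i) ∧ ∃ a ∈ σ.head, f = applyAtom (extendO σ π) a}

/-- Breadth-first semi-oblivious chase. -/
def sochase [DecidableEq V] (Rs : Set (Rule P V)) (I : Set (GAtom P C V)) : ℕ → Set (GAtom P C V)
  | 0 => I
  | i+1 => sochase Rs I i ∪
      {f | ∃ σ ∈ Rs, ∃ π, isTrigger σ π (sochase Rs I i) ∧ ∃ a ∈ σ.head, f = applyAtom (extendSO σ π) a}

def ochaseFull [DecidableEq V] (Rs : Set (Rule P V)) (I : Set (GAtom P C V)) : Set (GAtom P C V) :=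
  ⋃ i, ochase Rs I i
def sochaseFull [DecidableEq V] (Rs : Set (Rule P V)) (I : Set (GAtom P C V)) : Set (GAtom P C V) :=
  ⋃ i, sochase Rs I i

/-- Rank of a fact: the smallest breadth-first round at which it appears. -/
noncomputable def rankO [DecidableEq V] (Rs : Set (Rule P V)) (I : Set (GAtom P C V))
    (f : GAtom P C V) : ℕ := sInf {i | f ∈ ochase Rs I i}
noncomputable def rankSO [DecidableEq V] (Rs : Set (Rule P V)) (I : Set (GAtom P C V))
    (f : GAtom P C V) : ℕ := sInf {i | f ∈ sochase Rs I i}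

/-- Rank of a term: the smallest round at which some fact contains it. -/
noncomputable def trankO [DecidableEq V] (Rs : Set (Rule P V)) (I : Set (GAtom P C V))
    (t : GTerm P C V) : ℕ := sInf {i | ∃ f ∈ ochase Rs I i, t ∈ f.2}
noncomputable def trankSO [DecidableEq V] (Rs : Set (Rule P V)) (I : Set (GAtom P C V))
    (t : GTerm P C V) : ℕ := sInf {i | ∃ f ∈ sochase Rs I i, t ∈ f.2}

/-- Existential depth of a term. -/
def depth : GTerm P C V → ℕ
  | .const _ => 0
  | .var _ => 0
  | .fresh σ _ π => 1 + List.foldr (fun v m => max (depth (π v)) m) 0 (bodyVars σ)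

/-- Frontier existential depth of a term. -/
def frdepth [DecidableEq V] : GTerm P C V → ℕ
  | .const _ => 0
  | .var _ => 0
  | .fresh σ _ π =>
      if frontier σ = ([] : List V) then 1
      else 1 + List.foldr (fun v m => max (frdepth (π v)) m) 0 (frontier σ)

/-- Existential depth of a fact: max depth of its terms. -/
def depthF (f : GAtom P C V) : ℕ := List.foldr (fun t m => max (depth t) m) 0 f.2
def frdepthF [DecidableEq V] (f : GAtom P C V) : ℕ :=
  List.foldr (fun t m => max (frdepth t) m) 0 f.2

/-- Active domain of a set of atoms. -/
def adom (S : Set (GAtom P C V)) : Set (GTerm P C V) := {t | ∃ f ∈ S, t ∈ f.2}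

def mapAtom (h : GTerm P C V → GTerm P C V) (f : GAtom P C V) : GAtom P C V :=
  (f.1, f.2.map h)

/-- An embedding from `S` to `S'`: a substitution mapping every atom of `S` into `S'`. -/
def IsEmbedding (h : GTerm P C V → GTerm P C V) (S S' : Set (GAtom P C V)) : Prop :=
  ∀ f ∈ S, mapAtom h f ∈ S'

/-- `I` is an instance w.r.t. an arity function: finite, arity-correct,
and using only constants and variables. -/
def IsInstance (ar : P → ℕ) (I : Set (GAtom P C V)) : Prop :=
  I.Finite ∧ ∀ f ∈ I, f.2.length = ar f.1 ∧
    ∀ t ∈ f.2, (∃ c, t = GTerm.const c) ∨ (∃ v, t = GTerm.var v)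

def RuleOk (ar : P → ℕ) (σ : Rule P V) : Prop :=
  ∀ a ∈ σ.body ++ σ.head, a.2.length = ar a.1

/-- The critical instance over `ar` with special constant `a`. -/
def critical (ar : P → ℕ) (a : C) : Set (GAtom P C V) :=
  {f | f.2 = List.replicate (ar f.1) (GTerm.const a)}

/-!
A fact created in round `i + 1` of the oblivious chase but not in round `i` was produced by a
trigger that was not yet active in round `i`, so (by induction) one of its body terms has
existential depth `≥ i`; since every head atom of a fully-existential rule contains a fresh
null built over all body terms, the new fact contains a term of depth `≥ i + 1`. On the other
hand, in round `i` of the chase of the critical instance every term has depth `≤ i`. The map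
sending every constant and variable to the critical constant is a homomorphism from the chase
of any instance into the chase of the critical instance, round by round, and preserves depth.
Hence if the chase of the critical instance stops growing after round `k`, so does the chase
of every instance.
-/

section FoldrMax

variable {α : Type*} {f g : α → ℕ} {l : List α}

lemma foldr_max_eq_foldr_map (f : α → ℕ) (l : List α) :
    List.foldr (fun v m => max (f v) m) 0 l = (l.map f).foldr max ⊥ := by
  rw [List.foldr_map]; rfl

lemma le_foldr_max {u : α} (hu : u ∈ l) : f u ≤ List.foldr (fun v m => max (f v) m) 0 l := by
  rw [foldr_max_eq_foldr_map]
  exact List.le_max_of_le (List.mem_map_of_mem hu) le_rfl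

lemma foldr_max_le {n : ℕ} (h : ∀ u ∈ l, f u ≤ n) :
    List.foldr (fun v m => max (f v) m) 0 l ≤ n := by
  rw [foldr_max_eq_foldr_map]
  exact List.max_le_of_forall_le _ _ (by simpa using h)

lemma foldr_max_congr (h : ∀ u ∈ l, f u = g u) :
    List.foldr (fun v m => max (f v) m) 0 l = List.foldr (fun v m => max (g v) m) 0 l := by
  simp only [foldr_max_eq_foldr_map, List.map_congr_left h]

end FoldrMax

lemma mapAtom_applyAtom (h : GTerm P C V → GTerm P C V) (π : V → GTerm P C V)
    (b : P × List V) : mapAtom h (applyAtom π b) = applyAtom (h ∘ π) b := by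
  simp [mapAtom, applyAtom]

lemma mem_bodyVars {σ : Rule P V} {c : P × List V} {u : V} (hc : c ∈ σ.body) (hu : u ∈ c.2) :
    u ∈ bodyVars σ :=
  List.mem_flatMap.mpr ⟨c, hc, hu⟩

section Depth

variable [DecidableEq V] {σ : Rule P V} {π : V → GTerm P C V} {v : V}

lemma extendO_of_mem (hv : v ∈ bodyVars σ) : extendO σ π v = π v := by
  simp [extendO, hv]

lemma depth_extendO_of_not_mem (hv : v ∉ bodyVars σ) :
    depth (extendO σ π v) = 1 + List.foldr (fun u m => max (depth (π u)) m) 0 (bodyVars σ) := by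
  simp only [extendO, hv, if_false, depth]
  congr 1
  exact foldr_max_congr fun u hu => by simp [restrictBody, hu]

lemma depth_extendO_le {n : ℕ} (h : ∀ u ∈ bodyVars σ, depth (π u) ≤ n) :
    depth (extendO σ π v) ≤ n + 1 := by
  by_cases hv : v ∈ bodyVars σ
  · rw [extendO_of_mem hv]
    exact (h v hv).trans n.le_succ
  · rw [depth_extendO_of_not_mem hv]
    have := foldr_max_le h
    omega

lemma depth_lt_depth_extendO {u : V} (hu : u ∈ bodyVars σ) (hv : v ∉ bodyVars σ) :
    depth (π u) < depth (extendO σ π v) := by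
  rw [depth_extendO_of_not_mem hv]
  have := le_foldr_max (f := fun w => depth (π w)) hu
  omega

end Depth

section Chase

variable [DecidableEq V] {Rs : Set (Rule P V)} {I : Set (GAtom P C V)}

lemma applyAtom_mem_ochase_succ {i : ℕ} {σ : Rule P V} {π : V → GTerm P C V} {b : P × List V}
    (hσ : σ ∈ Rs) (hπ : isTrigger σ π (ochase Rs I i)) (hb : b ∈ σ.head) :
    applyAtom (extendO σ π) b ∈ ochase Rs I (i + 1) :=
  Or.inr ⟨σ, hσ, π, hπ, b, hb, rfl⟩

lemma ochase_mono {i j : ℕ} (hij : i ≤ j) : ochase Rs I i ⊆ ochase Rs I j := by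
  induction j, hij using Nat.le_induction with
  | base => exact subset_rfl
  | succ j _ ih => exact ih.trans Set.subset_union_left

lemma ochase_succ_congr {i j : ℕ} (h : ochase Rs I i = ochase Rs I j) :
    ochase Rs I (i + 1) = ochase Rs I (j + 1) := by
  rw [ochase, ochase, h]

lemma ochase_add_eq_of_succ_subset {k : ℕ} (h : ochase Rs I (k + 1) ⊆ ochase Rs I k) (n : ℕ) :
    ochase Rs I (k + n) = ochase Rs I k := by
  induction n with
  | zero => rfl
  | succ n ih =>
    rw [← add_assoc, ochase_succ_congr ih]
    exact h.antisymm Set.subset_union_left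

lemma ochase_eq_ochaseFull_of_succ_subset {k : ℕ} (h : ochase Rs I (k + 1) ⊆ ochase Rs I k) :
    ochase Rs I k = ochaseFull Rs I := by
  refine (Set.subset_iUnion _ k).antisymm (Set.iUnion_subset fun i => ?_)
  rcases le_or_gt i k with hik | hki
  · exact ochase_mono hik
  · obtain ⟨n, rfl⟩ := Nat.exists_eq_add_of_le hki.le
    rw [ochase_add_eq_of_succ_subset h]

lemma depth_le_of_mem_ochase (h0 : ∀ f ∈ I, ∀ t ∈ f.2, depth t = 0) :
    ∀ i, ∀ f ∈ ochase Rs I i, ∀ t ∈ f.2, depth t ≤ i := by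
  intro i
  induction i with
  | zero => exact fun f hf t ht => (h0 f hf t ht).le
  | succ i ih =>
    rintro f (hf | ⟨σ, -, π, hπ, b, -, rfl⟩) t ht
    · exact (ih f hf t ht).trans i.le_succ
    · obtain ⟨v, -, rfl⟩ := List.mem_map.mp ht
      refine depth_extendO_le fun u hu => ?_
      obtain ⟨c, hc, huc⟩ := List.mem_flatMap.mp hu
      exact ih _ (hπ c hc) (π u) (List.mem_map_of_mem huc)

lemma exists_le_depth_of_mem_ochase_succ (hFE : ∀ σ ∈ Rs, IsFE σ) :
    ∀ i, ∀ f ∈ ochase Rs I (i + 1), f ∉ ochase Rs I i →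
      ∃ t ∈ f.2, i + 1 ≤ depth t := by
  intro i
  induction i with
  | zero =>
    rintro f (hf | ⟨σ, hσ, π, -, b, hb, rfl⟩) hnew
    · exact absurd hf hnew
    obtain ⟨v, hv, hvσ⟩ := hFE σ hσ b hb
    refine ⟨extendO σ π v, List.mem_map_of_mem hv, ?_⟩
    rw [depth_extendO_of_not_mem hvσ]
    omega
  | succ i ih =>
    rintro f (hf | ⟨σ, hσ, π, hπ, b, hb, rfl⟩) hnew
    · exact absurd hf hnew
    -- the trigger is new in round `i + 1`, so one of its body atoms is a new fact there
    obtain ⟨c, hc, hcnew⟩ : ∃ c ∈ σ.body, applyAtom π c ∉ ochase Rs I i := by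
      by_contra! hold
      exact hnew (applyAtom_mem_ochase_succ hσ hold hb)
    obtain ⟨t, ht, hdt⟩ := ih _ (hπ c hc) hcnew
    obtain ⟨u, hu, rfl⟩ := List.mem_map.mp ht
    obtain ⟨v, hv, hvσ⟩ := hFE σ hσ b hb
    exact ⟨extendO σ π v, List.mem_map_of_mem hv,
      hdt.trans_lt (depth_lt_depth_extendO (mem_bodyVars hc hu) hvσ)⟩

lemma isEmbedding_ochase {J : Set (GAtom P C V)} {h : GTerm P C V → GTerm P C V}
    (hext : ∀ σ π v, h (extendO σ π v) = extendO σ (h ∘ π) v) (hIJ : IsEmbedding h I J) :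
    ∀ i, IsEmbedding h (ochase Rs I i) (ochase Rs J i) := by
  intro i
  induction i with
  | zero => exact hIJ
  | succ i ih =>
    rintro f (hf | ⟨σ, hσ, π, hπ, b, hb, rfl⟩)
    · exact Or.inl (ih f hf)
    · have hπ' : isTrigger σ (h ∘ π) (ochase Rs J i) := fun c hc => by
        simpa only [mapAtom_applyAtom] using ih _ (hπ c hc)
      rw [mapAtom_applyAtom,
        show h ∘ extendO σ π = extendO σ (h ∘ π) from funext (hext σ π)]
      exact applyAtom_mem_ochase_succ hσ hπ' hb

end Chase

section Critical

variable [DecidableEq V]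

/-- The substitution of a null is restricted to the body variables so that the map commutes
with the oblivious naming `extendO`. -/
def toCritical (a : C) : GTerm P C V → GTerm P C V
  | .const _ => .const a
  | .var _ => .const a
  | .fresh σ v π => .fresh σ v (restrictBody σ fun u => toCritical a (π u))

lemma toCritical_extendO (a : C) (σ : Rule P V) (π : V → GTerm P C V) (v : V) :
    toCritical a (extendO σ π v) = extendO σ (toCritical a ∘ π) v := by
  by_cases hv : v ∈ bodyVars σ
  · simp [extendO, hv]
  · simp only [extendO, hv, if_false, toCritical]
    congr 1
    funext u
    by_cases hu : u ∈ bodyVars σ <;> simp [restrictBody, hu]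

lemma depth_toCritical (a : C) (t : GTerm P C V) : depth (toCritical a t) = depth t := by
  induction t with
  | const => rfl
  | var => rfl
  | fresh σ v π ih =>
    simp only [toCritical, depth]
    congr 1
    exact foldr_max_congr fun u hu => by simp [restrictBody, hu, ih]

lemma isEmbedding_toCritical {ar : P → ℕ} (a : C) {I : Set (GAtom P C V)}
    (hI : IsInstance ar I) : IsEmbedding (toCritical a) I (critical ar a) := by
  intro f hf
  obtain ⟨hlen, hterms⟩ := hI.2 f hf
  refine List.eq_replicate_iff.mpr ⟨by simpa [mapAtom] using hlen, fun t ht => ?_⟩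
  obtain ⟨s, hs, rfl⟩ := List.mem_map.mp ht
  rcases hterms s hs with ⟨c, rfl⟩ | ⟨u, rfl⟩ <;> rfl

end Critical

lemma isInstance_critical [Finite P] (ar : P → ℕ) (a : C) :
    IsInstance ar (critical (V := V) ar a) := by
  refine ⟨(Set.finite_range fun p : P => (p, List.replicate (ar p) (GTerm.const a))).subset
    fun f hf => ⟨f.1, Prod.ext rfl hf.symm⟩, fun f hf => ?_⟩
  rw [hf]
  exact ⟨List.length_replicate, fun t ht => .inl ⟨a, List.eq_of_mem_replicate ht⟩⟩

lemma depth_eq_zero_of_mem_critical {ar : P → ℕ} {a : C} :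
    ∀ f ∈ critical (V := V) ar a, ∀ t ∈ f.2, depth t = 0 := by
  intro f hf t ht
  rw [hf] at ht
  rw [List.eq_of_mem_replicate ht, depth]

lemma ochase_succ_subset_of_critical [DecidableEq V] {ar : P → ℕ} {a : C}
    {Rs : Set (Rule P V)} (hFE : ∀ σ ∈ Rs, IsFE σ) {I : Set (GAtom P C V)}
    (hI : IsInstance ar I) {k : ℕ}
    (hk : ochase Rs (critical ar a) (k + 1) ⊆ ochase Rs (critical ar a) k) :
    ochase Rs I (k + 1) ⊆ ochase Rs I k := by
  intro f hf
  by_contra hnew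
  obtain ⟨t, ht, hdeep⟩ := exists_le_depth_of_mem_ochase_succ hFE k f hf hnew
  have himage := hk <| isEmbedding_ochase (toCritical_extendO a) (isEmbedding_toCritical a hI)
    (k + 1) f hf
  have hshallow := depth_le_of_mem_ochase depth_eq_zero_of_mem_critical k _ himage
    (toCritical a t) (List.mem_map_of_mem ht)
  rw [depth_toCritical] at hshallow
  omega

theorem statement5_general {P C V : Type} [DecidableEq V] [Finite P] (ar : P → ℕ) (a : C)
    (Rs : Set (Rule P V)) (hFE : ∀ σ ∈ Rs, IsFE σ) :
    (∀ I : Set (GAtom P C V), IsInstance ar I →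
        ∃ k, ochase Rs I k = ochaseFull Rs I) ↔
    (∃ k, ∀ I : Set (GAtom P C V), IsInstance ar I →
        ochase Rs I k = ochaseFull Rs I) := by
  constructor
  · intro hterm
    obtain ⟨k, hk⟩ := hterm _ (isInstance_critical ar a)
    have hstable : ochase Rs (critical ar a) (k + 1) ⊆ ochase Rs (critical ar a) k :=
      hk ▸ Set.subset_iUnion _ (k + 1)
    exact ⟨k, fun I hI =>
      ochase_eq_ochaseFull_of_succ_subset (ochase_succ_subset_of_critical hFE hI hstable)⟩
  · rintro ⟨k, hk⟩ I hI
    exact ⟨k, hk I hI⟩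

/-- for fully-existential rules, termination of the oblivious chase
on all instances is equivalent to boundedness of the oblivious chase. -/
theorem statement5 {P C V : Type} [DecidableEq V] [Finite P] (ar : P → ℕ) (a : C)
    (Rs : Set (Rule P V)) (hFE : ∀ σ ∈ Rs, IsFE σ) (hRs : ∀ σ ∈ Rs, RuleOk ar σ) :
    (∀ I : Set (GAtom P C V), IsInstance ar I →
        ∃ k, ochase Rs I k = ochaseFull Rs I) ↔
    (∃ k, ∀ I : Set (GAtom P C V), IsInstance ar I →
        ochase Rs I k = ochaseFull Rs I) :=
  statement5_general ar a Rs hFE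

end ChasePaper
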